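/- arXiv:1812.10117 — 3 statements merged into one kernel-verified Lean document; each statement's English description precedes it below -/
import Mathlib

section
/- Let Re > 0 and let θ : ℝ × ℝ → ℝ be twice continuously differentiable on an open set U ⊆ ℝ × ℝ with θ(x,t) > 0 on U, and suppose θ satisfies the heat equation ∂θ/∂t = (1/Re) ∂²θ/∂x² on U. Then the function u(x,t) = -(2/Re) · (∂θ/∂x)(x,t) / θ(x,t) satisfies the viscous Burgers equation ∂u/∂t + u ∂u/∂x = (1/Re) ∂²u/∂x² at every point of U. -/
/-!
Write `u = -(2/Re) θ_x / θ`. The heat equation `θ_xx = Re θ_t` turns the quotient rule for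
`u_x` into `u_x = -2 θ_t / θ + (Re/2) u²`, while the symmetry of the mixed partials
`θ_xt = θ_tx` gives `u_t = -(2/Re) ∂_x (θ_t / θ)`. Differentiating the first identity in `x` yields
`u_xx = -2 ∂_x (θ_t / θ) + Re u u_x = Re (u_t + u u_x)`.
-/

open Filter Topology

section PartialDerivatives

variable {F : Type*} [NormedAddCommGroup F] [NormedSpace ℝ F] {f : ℝ × ℝ → F} {x t : ℝ}

theorem HasFDerivAt.hasDerivAt_partial_fst {f' : ℝ × ℝ →L[ℝ] F}
    (h : HasFDerivAt f f' (x, t)) :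
    HasDerivAt (fun y => f (y, t)) (f' (1, 0)) x :=
  h.comp_hasDerivAt x ((hasDerivAt_id x).prodMk (hasDerivAt_const x t))

theorem HasFDerivAt.hasDerivAt_partial_snd {f' : ℝ × ℝ →L[ℝ] F}
    (h : HasFDerivAt f f' (x, t)) :
    HasDerivAt (fun s => f (x, s)) (f' (0, 1)) t :=
  h.comp_hasDerivAt t ((hasDerivAt_const t x).prodMk (hasDerivAt_id t))

theorem ContDiffAt.hasFDerivAt_fderiv (h : ContDiffAt ℝ 2 f (x, t)) :
    HasFDerivAt (fderiv ℝ f) (fderiv ℝ (fderiv ℝ f) (x, t)) (x, t) :=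
  ((h.fderiv_right (m := 1) one_add_one_eq_two.le).differentiableAt one_ne_zero).hasFDerivAt

theorem ContDiffAt.hasDerivAt_partial_fst_fderiv (h : ContDiffAt ℝ 2 f (x, t)) (v : ℝ × ℝ) :
    HasDerivAt (fun y => fderiv ℝ f (y, t) v) (fderiv ℝ (fderiv ℝ f) (x, t) (1, 0) v) x := by
  simpa using h.hasFDerivAt_fderiv.hasDerivAt_partial_fst.clm_apply (hasDerivAt_const x v)

theorem ContDiffAt.hasDerivAt_partial_snd_fderiv (h : ContDiffAt ℝ 2 f (x, t)) (v : ℝ × ℝ) :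
    HasDerivAt (fun s => fderiv ℝ f (x, s) v) (fderiv ℝ (fderiv ℝ f) (x, t) (0, 1) v) t := by
  simpa using h.hasFDerivAt_fderiv.hasDerivAt_partial_snd.clm_apply (hasDerivAt_const t v)

theorem Filter.Eventually.comp_prodMk_left {P : ℝ × ℝ → Prop}
    (h : ∀ᶠ q in 𝓝 (x, t), P q) :
    ∀ᶠ y in 𝓝 x, P (y, t) :=
  ((Continuous.prodMk_left t).tendsto x).eventually h

theorem Filter.Eventually.comp_prodMk_right {P : ℝ × ℝ → Prop}
    (h : ∀ᶠ q in 𝓝 (x, t), P q) :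
    ∀ᶠ s in 𝓝 t, P (x, s) :=
  ((Continuous.prodMk_right x).tendsto t).eventually h

end PartialDerivatives

noncomputable def coleHopf (Re : ℝ) (θ : ℝ × ℝ → ℝ) (q : ℝ × ℝ) : ℝ :=
  -(2 / Re) * deriv (fun x => θ (x, q.2)) q.1 / θ q

section ColeHopf

variable {Re : ℝ} {U : Set (ℝ × ℝ)} {θ : ℝ × ℝ → ℝ} {x t : ℝ}

theorem eventually_hasDerivAt_partial_fst (hU : IsOpen U) (hθ : DifferentiableOn ℝ θ U)
    {p : ℝ × ℝ} (hp : p ∈ U) :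
    ∀ᶠ q in 𝓝 p, HasDerivAt (fun y => θ (y, q.2)) (fderiv ℝ θ q (1, 0)) q.1 := by
  filter_upwards [hU.mem_nhds hp] with q hq
  exact ((hθ q hq).differentiableAt (hU.mem_nhds hq)).hasFDerivAt.hasDerivAt_partial_fst

theorem coleHopf_eventuallyEq (hU : IsOpen U) (hθ : DifferentiableOn ℝ θ U) {p : ℝ × ℝ}
    (hp : p ∈ U) :
    coleHopf Re θ =ᶠ[𝓝 p] fun q => -(2 / Re) * fderiv ℝ θ q (1, 0) / θ q := by
  filter_upwards [eventually_hasDerivAt_partial_fst hU hθ hp] with q hq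
  rw [coleHopf, hq.deriv]

theorem fderiv_fderiv_fst_fst_eq_of_heat (hRe : Re ≠ 0) (hU : IsOpen U)
    (hθ : ContDiffOn ℝ 2 θ U) (hp : (x, t) ∈ U)
    (hheat : deriv (fun s => θ (x, s)) t = (1 / Re) * deriv (deriv (fun y => θ (y, t))) x) :
    fderiv ℝ (fderiv ℝ θ) (x, t) (1, 0) (1, 0) = Re * fderiv ℝ θ (x, t) (0, 1) := by
  have hθp := (hθ _ hp).contDiffAt (hU.mem_nhds hp)
  have hθx : deriv (fun y => θ (y, t)) =ᶠ[𝓝 x] fun y => fderiv ℝ θ (y, t) (1, 0) := by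
    filter_upwards [(eventually_hasDerivAt_partial_fst hU (hθ.differentiableOn two_ne_zero)
      hp).comp_prodMk_left] with y hy using hy.deriv
  rw [(hθp.differentiableAt two_ne_zero).hasFDerivAt.hasDerivAt_partial_snd.deriv, hθx.deriv_eq,
    (hθp.hasDerivAt_partial_fst_fderiv (1, 0)).deriv] at hheat
  field_simp at hheat
  linarith

theorem hasDerivAt_coleHopf_snd (hU : IsOpen U) (hθ : ContDiffOn ℝ 2 θ U) (hp : (x, t) ∈ U)
    (hθ0 : θ (x, t) ≠ 0) :
    HasDerivAt (fun s => coleHopf Re θ (x, s))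
      (-(2 / Re) * deriv (fun y => fderiv ℝ θ (y, t) (0, 1) / θ (y, t)) x) t := by
  have hθp := (hθ _ hp).contDiffAt (hU.mem_nhds hp)
  have hθp' := (hθp.differentiableAt two_ne_zero).hasFDerivAt
  have hψ := ((hθp.hasDerivAt_partial_fst_fderiv (0, 1)).fun_div hθp'.hasDerivAt_partial_fst
    hθ0).deriv
  have hu := coleHopf_eventuallyEq (Re := Re) hU (hθ.differentiableOn two_ne_zero) hp
  refine (((hθp.hasDerivAt_partial_snd_fderiv (1, 0)).const_mul (-(2 / Re))).fun_div
    hθp'.hasDerivAt_partial_snd hθ0).congr_of_eventuallyEq hu.comp_prodMk_right |>.congr_deriv ?_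
  rw [hψ, hθp.isSymmSndFDerivAt (by simp) (0, 1) (1, 0)]
  ring

theorem deriv_coleHopf_fst_eventuallyEq (hRe : Re ≠ 0) (hU : IsOpen U)
    (hθ : ContDiffOn ℝ 2 θ U) (hθ0 : ∀ q ∈ U, θ q ≠ 0)
    (hheat : ∀ q ∈ U, deriv (fun t => θ (q.1, t)) q.2
      = (1 / Re) * deriv (deriv (fun x => θ (x, q.2))) q.1)
    (hp : (x, t) ∈ U) :
    deriv (fun y => coleHopf Re θ (y, t)) =ᶠ[𝓝 x]
        fun y => -2 * (fderiv ℝ θ (y, t) (0, 1) / θ (y, t))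
        + Re / 2 * coleHopf Re θ (y, t) ^ 2 := by
  have hUx : ∀ᶠ y in 𝓝 x, (y, t) ∈ U := Filter.Eventually.comp_prodMk_left (hU.mem_nhds hp)
  filter_upwards [hUx] with y hy
  have hθy := (hθ _ hy).contDiffAt (hU.mem_nhds hy)
  have hu := coleHopf_eventuallyEq (Re := Re) hU (hθ.differentiableOn two_ne_zero) hy
  have hu_fst : (fun y' => coleHopf Re θ (y', t)) =ᶠ[𝓝 y]
      fun y' => -(2 / Re) * fderiv ℝ θ (y', t) (1, 0) / θ (y', t) := hu.comp_prodMk_left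
  rw [hu_fst.deriv_eq, hu.eq_of_nhds,
    (((hθy.hasDerivAt_partial_fst_fderiv (1, 0)).const_mul (-(2 / Re))).fun_div
      (hθy.differentiableAt two_ne_zero).hasFDerivAt.hasDerivAt_partial_fst (hθ0 _ hy)).deriv,
    fderiv_fderiv_fst_fst_eq_of_heat hRe hU hθ hy (hheat _ hy)]
  field_simp
  ring

theorem hasDerivAt_deriv_coleHopf_fst (hRe : Re ≠ 0) (hU : IsOpen U)
    (hθ : ContDiffOn ℝ 2 θ U) (hθ0 : ∀ q ∈ U, θ q ≠ 0)
    (hheat : ∀ q ∈ U, deriv (fun t => θ (q.1, t)) q.2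
      = (1 / Re) * deriv (deriv (fun x => θ (x, q.2))) q.1)
    (hp : (x, t) ∈ U) :
    HasDerivAt (deriv fun y => coleHopf Re θ (y, t))
      (-2 * deriv (fun y => fderiv ℝ θ (y, t) (0, 1) / θ (y, t)) x
        + Re * coleHopf Re θ (x, t) * deriv (fun y => coleHopf Re θ (y, t)) x) x := by
  have hθp := (hθ _ hp).contDiffAt (hU.mem_nhds hp)
  have hθp' := (hθp.differentiableAt two_ne_zero).hasFDerivAt
  have hψ : DifferentiableAt ℝ (fun y => fderiv ℝ θ (y, t) (0, 1) / θ (y, t)) x :=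
    ((hθp.hasDerivAt_partial_fst_fderiv (0, 1)).fun_div hθp'.hasDerivAt_partial_fst
      (hθ0 _ hp)).differentiableAt
  have hu : DifferentiableAt ℝ (fun y => coleHopf Re θ (y, t)) x :=
    (((hθp.hasDerivAt_partial_fst_fderiv (1, 0)).const_mul (-(2 / Re))).fun_div
      hθp'.hasDerivAt_partial_fst (hθ0 _ hp)).differentiableAt.congr_of_eventuallyEq
      (coleHopf_eventuallyEq hU (hθ.differentiableOn two_ne_zero) hp).comp_prodMk_left
  have hu_x := deriv_coleHopf_fst_eventuallyEq hRe hU hθ hθ0 hheat hp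
  refine (((hψ.hasDerivAt.const_mul (-2)).add ((hu.hasDerivAt.pow 2).const_mul (Re / 2)))
    |>.congr_of_eventuallyEq hu_x).congr_deriv ?_
  ring

end ColeHopf

/-- **Cole–Hopf transformation.** If `θ` is a positive `C²` solution of the heat
equation `θ_t = (1/Re) θ_xx` on an open set `U ⊆ ℝ × ℝ`, then
`u = -(2/Re) θ_x / θ` solves the viscous Burgers equation
`u_t + u u_x = (1/Re) u_xx` on `U`. -/
theorem cole_hopf_transform (Re : ℝ) (hRe : 0 < Re)
    (U : Set (ℝ × ℝ)) (hU : IsOpen U)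
    (θ : ℝ × ℝ → ℝ) (hθ : ContDiffOn ℝ 2 θ U)
    (hpos : ∀ p ∈ U, 0 < θ p)
    (hheat : ∀ p ∈ U,
      deriv (fun t => θ (p.1, t)) p.2
        = (1 / Re) * deriv (deriv (fun x => θ (x, p.2))) p.1) :
    ∀ p ∈ U,
      (fun q : ℝ × ℝ => deriv (fun t =>
          -(2 / Re) * deriv (fun x => θ (x, t)) q.1 / θ (q.1, t)) q.2) p
      + (-(2 / Re) * deriv (fun x => θ (x, p.2)) p.1 / θ p)
        * deriv (fun x => -(2 / Re) * deriv (fun y => θ (y, p.2)) x / θ (x, p.2)) p.1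
      = (1 / Re)
        * deriv (deriv (fun x =>
            -(2 / Re) * deriv (fun y => θ (y, p.2)) x / θ (x, p.2))) p.1 := by
  rintro ⟨x, t⟩ hp
  have hθ0 : ∀ q ∈ U, θ q ≠ 0 := fun q hq => (hpos q hq).ne'
  change deriv (fun s => coleHopf Re θ (x, s)) t
      + coleHopf Re θ (x, t) * deriv (fun y => coleHopf Re θ (y, t)) x
    = 1 / Re * deriv (deriv fun y => coleHopf Re θ (y, t)) x
  rw [(hasDerivAt_coleHopf_snd hU hθ hp (hθ0 _ hp)).deriv,
    (hasDerivAt_deriv_coleHopf_fst hRe.ne' hU hθ hθ0 hheat hp).deriv]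
  field_simp
end

section
/- Let Re > 0 and let φ : [0,1] → ℝ be continuous with φ(x) > 0 for all x ∈ [0,1]. Let a_0 = ∫_0^1 φ(x) dx and a_n = 2 ∫_0^1 φ(x) cos(nπx) dx for n ≥ 1, and define θ(x,t) = a_0 + ∑_{n=1}^∞ a_n exp(-n²π²t/Re) cos(nπx). Then θ(x,t) > 0 for every x ∈ [0,1] and every t > 0. -/
/-!
The heat series is `∫₀¹ φ(y) N(y) dy`, where `N(y) = 1 + 2 ∑ₙ e^{-π n² s} cos(nπx) cos(nπy)`
with `s = π t / Re`. By the product-to-sum formula `N` is the mean of the two theta series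
`∑_{n ∈ ℤ} e^{-π n² s} cos(2π a n)` at `a = (x ∓ y)/2`, and Jacobi's transformation formula
rewrites each of them as a positive multiple of `∑_{n ∈ ℤ} e^{-π (n + a)² / s} > 0`. Hence the
integrand is positive. Exchanging sum and integral is dominated convergence, since the terms are
bounded by `2 e^{-π n² s} |φ|`.
-/

open Real MeasureTheory

namespace HurwitzZeta

lemma evenKernel_pos (a : UnitAddCircle) {t : ℝ} (ht : 0 < t) : 0 < evenKernel a t := by
  induction a using QuotientAddGroup.induction_on with
  | H a =>
    have h := hasSum_int_evenKernel a ht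
    rw [← h.tsum_eq]
    exact h.summable.tsum_pos (fun _ ↦ (exp_pos _).le) 0 (exp_pos _)

lemma cosKernel_pos (a : UnitAddCircle) {t : ℝ} (ht : 0 < t) : 0 < cosKernel a t := by
  have h := evenKernel_pos a (inv_pos.2 ht)
  rw [evenKernel_functional_equation, one_div t⁻¹, inv_inv] at h
  exact pos_of_mul_pos_right h (by positivity)

lemma continuous_cosKernel_left {t : ℝ} (ht : 0 < t) :
    Continuous fun a : ℝ ↦ cosKernel a t := by
  have h : (fun a : ℝ ↦ cosKernel a t) = fun a : ℝ ↦ (jacobiTheta₂ a (Complex.I * t)).re := by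
    ext a
    rw [← cosKernel_def, Complex.ofReal_re]
  rw [h, continuous_iff_continuousAt]
  intro a
  refine Complex.continuous_re.continuousAt.comp ?_
  exact (continuousAt_jacobiTheta₂ a (by simpa using ht)).comp
    (f := fun u : ℝ ↦ ((u : ℂ), Complex.I * t)) (by fun_prop)

end HurwitzZeta

open HurwitzZeta

/-- The Neumann heat kernel of `[0, 1]` for `∂ₜ = π⁻¹ ∂ₓ²`, by the method of images. -/
noncomputable def neumannHeatKernel (t x y : ℝ) : ℝ :=
  (cosKernel ((x - y) / 2 : ℝ) t + cosKernel ((x + y) / 2 : ℝ) t) / 2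

lemma hasSum_neumannHeatKernel {t : ℝ} (ht : 0 < t) (x y : ℝ) :
    HasSum (fun n : ℕ ↦ 2 * exp (-π * (n + 1) ^ 2 * t) * cos ((n + 1) * π * x) *
      cos ((n + 1) * π * y)) (neumannHeatKernel t x y - 1) := by
  have h := ((hasSum_nat_cosKernel₀ ((x - y) / 2) ht).add
    (hasSum_nat_cosKernel₀ ((x + y) / 2) ht)).div_const 2
  have hval : neumannHeatKernel t x y - 1 =
      (cosKernel ((x - y) / 2 : ℝ) t - 1 + (cosKernel ((x + y) / 2 : ℝ) t - 1)) / 2 := by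
    unfold neumannHeatKernel
    ring
  rw [hval]
  refine h.congr_fun fun n ↦ ?_
  have hsub : 2 * π * ((x - y) / 2) * (n + 1) = (n + 1) * π * x - (n + 1) * π * y := by ring
  have hadd : 2 * π * ((x + y) / 2) * (n + 1) = (n + 1) * π * x + (n + 1) * π * y := by ring
  rw [hsub, hadd, cos_sub, cos_add]
  ring

lemma neumannHeatKernel_pos {t : ℝ} (ht : 0 < t) (x y : ℝ) : 0 < neumannHeatKernel t x y := by
  have := cosKernel_pos ((x - y) / 2 : ℝ) ht
  have := cosKernel_pos ((x + y) / 2 : ℝ) ht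
  rw [neumannHeatKernel]
  positivity

lemma continuous_neumannHeatKernel {t : ℝ} (ht : 0 < t) (x : ℝ) :
    Continuous (neumannHeatKernel t x) := by
  have h := continuous_cosKernel_left ht
  exact ((h.comp (by fun_prop)).add (h.comp (by fun_prop))).div_const 2

theorem hasSum_intervalIntegral_mul {ι : Type*} [Countable ι] {a b : ℝ} {φ : ℝ → ℝ}
    (hφ : IntervalIntegrable φ volume a b) {g : ι → ℝ → ℝ} {G : ℝ → ℝ} {u : ι → ℝ}
    (hg : ∀ i, Continuous (g i)) (hgu : ∀ i y, ‖g i y‖ ≤ u i) (hu : Summable u)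
    (hG : ∀ y, HasSum (fun i ↦ g i y) (G y)) :
    HasSum (fun i ↦ ∫ y in a..b, φ y * g i y) (∫ y in a..b, φ y * G y) := by
  refine intervalIntegral.hasSum_integral_of_dominated_convergence
    (fun i y ↦ ‖φ y‖ * u i) (fun i ↦ ?_) (fun i ↦ ?_) ?_ ?_ ?_
  · exact (hφ.mul_continuousOn (hg i).continuousOn).def'.aestronglyMeasurable
  · filter_upwards with y _
    rw [norm_mul]
    exact mul_le_mul_of_nonneg_left (hgu i y) (norm_nonneg _)
  · filter_upwards with y _ using hu.mul_left _
  · simp_rw [tsum_mul_left]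
    exact hφ.norm.mul_const _
  · filter_upwards with y _ using (hG y).mul_left (φ y)

lemma hasSum_intervalIntegral_mul_neumannHeatKernel {t : ℝ} (ht : 0 < t) (x : ℝ) {a b : ℝ}
    {φ : ℝ → ℝ} (hφ : IntervalIntegrable φ volume a b) :
    HasSum (fun n : ℕ ↦ ∫ y in a..b, φ y * (2 * exp (-π * (n + 1) ^ 2 * t) *
      cos ((n + 1) * π * x) * cos ((n + 1) * π * y)))
      (∫ y in a..b, φ y * (neumannHeatKernel t x y - 1)) := by
  have hu : Summable fun n : ℕ ↦ 2 * exp (-π * (n + 1) ^ 2 * t) := by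
    simpa [HurwitzKernelBounds.f_nat] using
      (HurwitzKernelBounds.summable_f_nat 0 1 ht).mul_left 2
  refine hasSum_intervalIntegral_mul hφ (fun n ↦ by fun_prop) (fun n y ↦ ?_) hu
    (hasSum_neumannHeatKernel ht x)
  rw [norm_mul, norm_mul, Real.norm_eq_abs, Real.norm_eq_abs, abs_of_pos (by positivity)]
  exact (mul_le_of_le_one_right (by positivity) (abs_cos_le_one _)).trans
    (mul_le_of_le_one_right (by positivity) (abs_cos_le_one _))

/-- If `φ` is continuous and strictly positive on `[0,1]`, then the cosine heat
series built from its Fourier cosine coefficients is strictly positive for all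
`x ∈ [0,1]` and `t > 0`. -/
theorem cosine_heat_series_positive (Re : ℝ) (hRe : 0 < Re)
    (φ : ℝ → ℝ) (hcont : ContinuousOn φ (Set.Icc 0 1))
    (hpos : ∀ x ∈ Set.Icc (0:ℝ) 1, 0 < φ x)
    (a : ℕ → ℝ) (ha0 : a 0 = ∫ x in (0:ℝ)..1, φ x)
    (han : ∀ n : ℕ, 1 ≤ n → a n = 2 * ∫ x in (0:ℝ)..1, φ x * cos ((n : ℝ) * π * x))
    (θ : ℝ → ℝ → ℝ)
    (hθ : ∀ x t, θ x t
      = a 0 + ∑' n : ℕ,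
          a (n + 1) * exp (-((n + 1 : ℝ) ^ 2 * π ^ 2 * t) / Re)
            * cos ((n + 1 : ℝ) * π * x)) :
    ∀ x ∈ Set.Icc (0:ℝ) 1, ∀ t > (0:ℝ), 0 < θ x t := by
  intro x _ t ht
  set s := π * t / Re with hs_def
  have hs : 0 < s := by positivity
  have hφ := hcont.intervalIntegrable_of_Icc (μ := volume) zero_le_one
  have hterm (n : ℕ) : a (n + 1) * exp (-((n + 1 : ℝ) ^ 2 * π ^ 2 * t) / Re) *
      cos ((n + 1 : ℝ) * π * x) = ∫ y in (0:ℝ)..1, φ y * (2 * exp (-π * (n + 1) ^ 2 * s) *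
        cos ((n + 1) * π * x) * cos ((n + 1) * π * y)) := by
    have hexp : -((n + 1 : ℝ) ^ 2 * π ^ 2 * t) / Re = -π * (n + 1) ^ 2 * s := by
      rw [hs_def]; ring
    simp_rw [mul_left_comm (φ _), intervalIntegral.integral_const_mul]
    rw [han (n + 1) (by omega), hexp]
    push_cast
    ring
  have hNint := hφ.mul_continuousOn (continuous_neumannHeatKernel hs x).continuousOn
  have hθN : θ x t = ∫ y in (0:ℝ)..1, φ y * neumannHeatKernel s x y := by
    rw [hθ, ha0, tsum_congr hterm,
      (hasSum_intervalIntegral_mul_neumannHeatKernel hs x hφ).tsum_eq]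
    simp_rw [mul_sub, mul_one]
    rw [intervalIntegral.integral_sub hNint hφ, add_sub_cancel]
  rw [hθN]
  exact intervalIntegral.intervalIntegral_pos_of_pos_on hNint
    (fun y hy ↦ mul_pos (hpos y (Set.Ioo_subset_Icc_self hy)) (neumannHeatKernel_pos hs x y))
    one_pos
end

section
/- Let φ be the linear B-spline (hat) function, φ(x) = x for 0 ≤ x < 1, φ(x) = 2 - x for 1 ≤ x < 2, and φ(x) = 0 otherwise, and let ψ be the linear B-spline wavelet defined piecewise by ψ(x) = (1/6)·x on [0,1/2), (1/6)·(4-7x) on [1/2,1), (1/6)·(-19+16x) on [1,3/2), (1/6)·(29-16x) on [3/2,2), (1/6)·(-17+7x) on [2,5/2), (1/6)·(3-x) on [5/2,3), and ψ(x) = 0 otherwise. Then for every integer m, ∫_ℝ ψ(x) φ(x - m) dx = 0. -/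
open MeasureTheory

private lemma poly_integral (a b c0 c1 c2 : ℝ) :
    (∫ x in a..b, (c0 + c1 * x + c2 * x ^ 2)) =
      c0 * (b - a) + c1 * (b ^ 2 - a ^ 2) / 2 + c2 * (b ^ 3 - a ^ 3) / 3 := by
  have i1 : IntervalIntegrable (fun _ : ℝ => c0) volume a b :=
    continuous_const.intervalIntegrable a b
  have i2 : IntervalIntegrable (fun x : ℝ => c1 * x) volume a b :=
    (by fun_prop : Continuous fun x : ℝ => c1 * x).intervalIntegrable a b
  have i3 : IntervalIntegrable (fun x : ℝ => c2 * x ^ 2) volume a b :=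
    (by fun_prop : Continuous fun x : ℝ => c2 * x ^ 2).intervalIntegrable a b
  rw [intervalIntegral.integral_add (i1.add i2) i3, intervalIntegral.integral_add i1 i2,
    intervalIntegral.integral_const, intervalIntegral.integral_const_mul,
    intervalIntegral.integral_const_mul, integral_id, integral_pow]
  rw [smul_eq_mul]
  push_cast
  ring

private lemma integral_congr_Ioo {a b : ℝ} (hab : a ≤ b) {f g : ℝ → ℝ}
    (h : ∀ x ∈ Set.Ioo a b, f x = g x) :
    ∫ x in a..b, f x = ∫ x in a..b, g x := by
  apply intervalIntegral.integral_congr_ae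
  rw [MeasureTheory.ae_iff]
  refine measure_mono_null (fun x hx => ?_) (measure_singleton b)
  push_neg at hx
  obtain ⟨hmem, hne⟩ := hx
  rw [Set.uIoc_of_le hab] at hmem
  rcases lt_or_eq_of_le hmem.2 with hlt | heq
  · exact absurd (h x ⟨hmem.1, hlt⟩) hne
  · exact heq

private lemma bdd_intervalIntegrable {f : ℝ → ℝ} (hm : Measurable f) {C : ℝ}
    (hb : ∀ x, |f x| ≤ C) (a b : ℝ) : IntervalIntegrable f volume a b := by
  rw [intervalIntegrable_iff]
  apply MeasureTheory.Measure.integrableOn_of_bounded (M := C)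
  · exact ne_of_lt (by rw [Set.uIoc]; exact measure_Ioc_lt_top)
  · exact hm.aestronglyMeasurable
  · exact MeasureTheory.ae_of_all _ fun x => by simpa [Real.norm_eq_abs] using hb x

/-- **Semi-orthogonality.** The linear B-spline (Chui–Wang) wavelet `ψ` is
orthogonal in `L²(ℝ)` to every integer translate of the hat scaling function `φ`. -/
theorem bspline_wavelet_semiorthogonal
    (φ : ℝ → ℝ)
    (hφ : ∀ x : ℝ, φ x =
      if 0 ≤ x ∧ x < 1 then x
      else if 1 ≤ x ∧ x < 2 then 2 - x
      else 0)
    (ψ : ℝ → ℝ)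
    (hψ : ∀ x : ℝ, ψ x =
      if 0 ≤ x ∧ x < 1/2 then (1/6) * x
      else if 1/2 ≤ x ∧ x < 1 then (1/6) * (4 - 7*x)
      else if 1 ≤ x ∧ x < 3/2 then (1/6) * (-19 + 16*x)
      else if 3/2 ≤ x ∧ x < 2 then (1/6) * (29 - 16*x)
      else if 2 ≤ x ∧ x < 5/2 then (1/6) * (-17 + 7*x)
      else if 5/2 ≤ x ∧ x < 3 then (1/6) * (3 - x)
      else 0)
    : ∀ m : ℤ, (∫ x : ℝ, ψ x * φ (x - m)) = 0 := by
  -- branch evaluation lemmas for φ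
  have hφ1 : ∀ y : ℝ, 0 ≤ y → y < 1 → φ y = y := fun y h1 h2 => by
    rw [hφ, if_pos ⟨h1, h2⟩]
  have hφ2 : ∀ y : ℝ, 1 ≤ y → y < 2 → φ y = 2 - y := fun y h1 h2 => by
    rw [hφ, if_neg (by rintro ⟨u, v⟩; linarith), if_pos ⟨h1, h2⟩]
  have hφ0 : ∀ y : ℝ, y ≤ 0 ∨ 2 ≤ y → φ y = 0 := by
    intro y hy
    rcases hy with hy | hy
    · rcases hy.lt_or_eq with h | h
      · rw [hφ, if_neg (by rintro ⟨u, v⟩; linarith), if_neg (by rintro ⟨u, v⟩; linarith)]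
      · subst h; rw [hφ]; norm_num
    · rw [hφ, if_neg (by rintro ⟨u, v⟩; linarith), if_neg (by rintro ⟨u, v⟩; linarith)]
  -- branch evaluation lemmas for ψ
  have hψ1 : ∀ x : ℝ, 0 ≤ x → x < 1/2 → ψ x = 1/6 * x := fun x h1 h2 => by
    rw [hψ, if_pos ⟨h1, h2⟩]
  have hψ2 : ∀ x : ℝ, 1/2 ≤ x → x < 1 → ψ x = 1/6 * (4 - 7*x) := fun x h1 h2 => by
    rw [hψ, if_neg (by rintro ⟨u, v⟩; linarith), if_pos ⟨h1, h2⟩]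
  have hψ3 : ∀ x : ℝ, 1 ≤ x → x < 3/2 → ψ x = 1/6 * (-19 + 16*x) := fun x h1 h2 => by
    rw [hψ, if_neg (by rintro ⟨u, v⟩; linarith), if_neg (by rintro ⟨u, v⟩; linarith),
      if_pos ⟨h1, h2⟩]
  have hψ4 : ∀ x : ℝ, 3/2 ≤ x → x < 2 → ψ x = 1/6 * (29 - 16*x) := fun x h1 h2 => by
    rw [hψ, if_neg (by rintro ⟨u, v⟩; linarith), if_neg (by rintro ⟨u, v⟩; linarith),
      if_neg (by rintro ⟨u, v⟩; linarith), if_pos ⟨h1, h2⟩]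
  have hψ5 : ∀ x : ℝ, 2 ≤ x → x < 5/2 → ψ x = 1/6 * (-17 + 7*x) := fun x h1 h2 => by
    rw [hψ, if_neg (by rintro ⟨u, v⟩; linarith), if_neg (by rintro ⟨u, v⟩; linarith),
      if_neg (by rintro ⟨u, v⟩; linarith), if_neg (by rintro ⟨u, v⟩; linarith),
      if_pos ⟨h1, h2⟩]
  have hψ6 : ∀ x : ℝ, 5/2 ≤ x → x < 3 → ψ x = 1/6 * (3 - x) := fun x h1 h2 => by
    rw [hψ, if_neg (by rintro ⟨u, v⟩; linarith), if_neg (by rintro ⟨u, v⟩; linarith),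
      if_neg (by rintro ⟨u, v⟩; linarith), if_neg (by rintro ⟨u, v⟩; linarith),
      if_neg (by rintro ⟨u, v⟩; linarith), if_pos ⟨h1, h2⟩]
  have hψ0 : ∀ x : ℝ, x ≤ 0 ∨ 3 ≤ x → ψ x = 0 := by
    intro x hx
    rcases hx with hx | hx
    · rcases hx.lt_or_eq with h | h
      · rw [hψ, if_neg (by rintro ⟨u, v⟩; linarith), if_neg (by rintro ⟨u, v⟩; linarith),
          if_neg (by rintro ⟨u, v⟩; linarith), if_neg (by rintro ⟨u, v⟩; linarith),
          if_neg (by rintro ⟨u, v⟩; linarith), if_neg (by rintro ⟨u, v⟩; linarith)]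
      · subst h; rw [hψ]; norm_num
    · rw [hψ, if_neg (by rintro ⟨u, v⟩; linarith), if_neg (by rintro ⟨u, v⟩; linarith),
        if_neg (by rintro ⟨u, v⟩; linarith), if_neg (by rintro ⟨u, v⟩; linarith),
        if_neg (by rintro ⟨u, v⟩; linarith), if_neg (by rintro ⟨u, v⟩; linarith)]
  -- measurability
  have hsm : ∀ a b : ℝ, MeasurableSet {x : ℝ | a ≤ x ∧ x < b} := fun a b =>
    (measurableSet_Ico : MeasurableSet (Set.Ico a b))
  have hφm : Measurable φ := by
    have hfe : φ = fun y => if 0 ≤ y ∧ y < 1 then y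
        else if 1 ≤ y ∧ y < 2 then 2 - y else 0 := funext hφ
    rw [hfe]
    exact Measurable.ite (hsm 0 1) measurable_id
      (Measurable.ite (hsm 1 2) (by fun_prop) measurable_const)
  have hψm : Measurable ψ := by
    have hfe : ψ = fun x => if 0 ≤ x ∧ x < 1/2 then (1/6) * x
      else if 1/2 ≤ x ∧ x < 1 then (1/6) * (4 - 7*x)
      else if 1 ≤ x ∧ x < 3/2 then (1/6) * (-19 + 16*x)
      else if 3/2 ≤ x ∧ x < 2 then (1/6) * (29 - 16*x)
      else if 2 ≤ x ∧ x < 5/2 then (1/6) * (-17 + 7*x)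
      else if 5/2 ≤ x ∧ x < 3 then (1/6) * (3 - x)
      else 0 := funext hψ
    rw [hfe]
    exact Measurable.ite (hsm 0 (1/2)) (by fun_prop)
      (Measurable.ite (hsm (1/2) 1) (by fun_prop)
      (Measurable.ite (hsm 1 (3/2)) (by fun_prop)
      (Measurable.ite (hsm (3/2) 2) (by fun_prop)
      (Measurable.ite (hsm 2 (5/2)) (by fun_prop)
      (Measurable.ite (hsm (5/2) 3) (by fun_prop) measurable_const)))))
  -- boundedness
  have hφb : ∀ y : ℝ, |φ y| ≤ 2 := fun y => by
    rw [hφ]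
    split_ifs with h1 h2
    · rw [abs_le]; constructor <;> linarith [h1.1, h1.2]
    · rw [abs_le]; constructor <;> linarith [h2.1, h2.2]
    · norm_num
  have hψb : ∀ x : ℝ, |ψ x| ≤ 6 := fun x => by
    rw [hψ]
    split_ifs with h1 h2 h3 h4 h5 h6
    · rw [abs_le]; constructor <;> linarith [h1.1, h1.2]
    · rw [abs_le]; constructor <;> linarith [h2.1, h2.2]
    · rw [abs_le]; constructor <;> linarith [h3.1, h3.2]
    · rw [abs_le]; constructor <;> linarith [h4.1, h4.2]
    · rw [abs_le]; constructor <;> linarith [h5.1, h5.2]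
    · rw [abs_le]; constructor <;> linarith [h6.1, h6.2]
    · norm_num
  intro m
  have hfm : Measurable (fun x : ℝ => ψ x * φ (x - (m:ℝ))) :=
    hψm.mul (hφm.comp (by fun_prop))
  have hfb : ∀ x : ℝ, |ψ x * φ (x - (m:ℝ))| ≤ 12 := fun x => by
    rw [abs_mul]
    calc |ψ x| * |φ (x - (m:ℝ))| ≤ 6 * 2 :=
          mul_le_mul (hψb x) (hφb _) (abs_nonneg _) (by norm_num)
      _ = 12 := by norm_num
  have hfi : ∀ a b : ℝ, IntervalIntegrable (fun x : ℝ => ψ x * φ (x - (m:ℝ))) volume a b :=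
    fun a b => bdd_intervalIntegrable hfm hfb a b
  rcases lt_or_ge m (-1) with hm | hm
  · -- m ≤ -2 : supports are disjoint
    have hm' : (m:ℝ) ≤ -2 := by exact_mod_cast (by omega : m ≤ -2)
    have hzero : ∀ x : ℝ, ψ x * φ (x - (m:ℝ)) = 0 := by
      intro x
      rcases le_or_gt x 0 with h | h
      · rw [hψ0 x (Or.inl h), zero_mul]
      · rw [hφ0 _ (Or.inr (by linarith)), mul_zero]
    simp only [hzero, integral_zero]
  rcases lt_or_ge 2 m with hm2 | hm2
  · -- m ≥ 3 : supports are disjoint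
    have hm' : (3:ℝ) ≤ (m:ℝ) := by exact_mod_cast (by omega : (3:ℤ) ≤ m)
    have hzero : ∀ x : ℝ, ψ x * φ (x - (m:ℝ)) = 0 := by
      intro x
      rcases le_or_gt 3 x with h | h
      · rw [hψ0 x (Or.inr h), zero_mul]
      · rw [hφ0 _ (Or.inl (by linarith)), mul_zero]
    simp only [hzero, integral_zero]
  interval_cases m
  · -- m = -1
    simp only [show ((-1:ℤ):ℝ) = -1 from by norm_num, sub_neg_eq_add] at hfi ⊢
    have e1 : ∀ x ∈ Set.Ioo (0:ℝ) (1/2),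
        ψ x * φ (x + 1) = 0 + (1/6) * x + (-(1/6)) * x ^ 2 := by
      intro x hx
      rw [hψ1 x hx.1.le hx.2, hφ2 (x + 1) (by linarith [hx.1]) (by linarith [hx.2])]
      ring
    have e2 : ∀ x ∈ Set.Ioo (1/2:ℝ) 1,
        ψ x * φ (x + 1) = 2/3 + (-(11/6)) * x + (7/6) * x ^ 2 := by
      intro x hx
      rw [hψ2 x hx.1.le hx.2, hφ2 (x + 1) (by linarith [hx.1]) (by linarith [hx.2])]
      ring
    have hz : ∀ x ∉ Set.Ioc (0:ℝ) 1, ψ x * φ (x + 1) = 0 := by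
      intro x hx
      simp only [Set.mem_Ioc, not_and_or, not_lt, not_le] at hx
      rcases hx with h | h
      · rw [hψ0 x (Or.inl h), zero_mul]
      · rw [hφ0 _ (Or.inr (by linarith)), mul_zero]
    rw [← MeasureTheory.setIntegral_eq_integral_of_forall_compl_eq_zero hz,
      ← intervalIntegral.integral_of_le (by norm_num : (0:ℝ) ≤ 1),
      ← intervalIntegral.integral_add_adjacent_intervals (hfi 0 (1/2)) (hfi (1/2) 1),
      integral_congr_Ioo (by norm_num) e1, integral_congr_Ioo (by norm_num) e2,
      poly_integral, poly_integral]
    norm_num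
  · -- m = 0
    simp only [show ((0:ℤ):ℝ) = 0 from by norm_num, sub_zero] at hfi ⊢
    have e1 : ∀ x ∈ Set.Ioo (0:ℝ) (1/2),
        ψ x * φ x = 0 + 0 * x + (1/6) * x ^ 2 := by
      intro x hx
      rw [hψ1 x hx.1.le hx.2, hφ1 x hx.1.le (by linarith [hx.2])]
      ring
    have e2 : ∀ x ∈ Set.Ioo (1/2:ℝ) 1,
        ψ x * φ x = 0 + (2/3) * x + (-(7/6)) * x ^ 2 := by
      intro x hx
      rw [hψ2 x hx.1.le hx.2, hφ1 x (by linarith [hx.1]) hx.2]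
      ring
    have e3 : ∀ x ∈ Set.Ioo (1:ℝ) (3/2),
        ψ x * φ x = -19/3 + (17/2) * x + (-(8/3)) * x ^ 2 := by
      intro x hx
      rw [hψ3 x hx.1.le hx.2, hφ2 x hx.1.le (by linarith [hx.2])]
      ring
    have e4 : ∀ x ∈ Set.Ioo (3/2:ℝ) 2,
        ψ x * φ x = 29/3 + (-(61/6)) * x + (8/3) * x ^ 2 := by
      intro x hx
      rw [hψ4 x hx.1.le hx.2, hφ2 x (by linarith [hx.1]) hx.2]
      ring
    have hz : ∀ x ∉ Set.Ioc (0:ℝ) 2, ψ x * φ x = 0 := by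
      intro x hx
      simp only [Set.mem_Ioc, not_and_or, not_lt, not_le] at hx
      rcases hx with h | h
      · rw [hψ0 x (Or.inl h), zero_mul]
      · rw [hφ0 _ (Or.inr (by linarith)), mul_zero]
    rw [← MeasureTheory.setIntegral_eq_integral_of_forall_compl_eq_zero hz,
      ← intervalIntegral.integral_of_le (by norm_num : (0:ℝ) ≤ 2),
      ← intervalIntegral.integral_add_adjacent_intervals (hfi 0 1) (hfi 1 2),
      ← intervalIntegral.integral_add_adjacent_intervals (hfi 0 (1/2)) (hfi (1/2) 1),
      ← intervalIntegral.integral_add_adjacent_intervals (hfi 1 (3/2)) (hfi (3/2) 2),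
      integral_congr_Ioo (by norm_num) e1, integral_congr_Ioo (by norm_num) e2,
      integral_congr_Ioo (by norm_num) e3, integral_congr_Ioo (by norm_num) e4,
      poly_integral, poly_integral, poly_integral, poly_integral]
    norm_num
  · -- m = 1
    simp only [show ((1:ℤ):ℝ) = 1 from by norm_num] at hfi ⊢
    have e1 : ∀ x ∈ Set.Ioo (1:ℝ) (3/2),
        ψ x * φ (x - 1) = 19/6 + (-(35/6)) * x + (8/3) * x ^ 2 := by
      intro x hx
      rw [hψ3 x hx.1.le hx.2, hφ1 (x - 1) (by linarith [hx.1]) (by linarith [hx.2])]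
      ring
    have e2 : ∀ x ∈ Set.Ioo (3/2:ℝ) 2,
        ψ x * φ (x - 1) = -29/6 + (15/2) * x + (-(8/3)) * x ^ 2 := by
      intro x hx
      rw [hψ4 x hx.1.le hx.2, hφ1 (x - 1) (by linarith [hx.1]) (by linarith [hx.2])]
      ring
    have e3 : ∀ x ∈ Set.Ioo (2:ℝ) (5/2),
        ψ x * φ (x - 1) = -17/2 + (19/3) * x + (-(7/6)) * x ^ 2 := by
      intro x hx
      rw [hψ5 x hx.1.le hx.2, hφ2 (x - 1) (by linarith [hx.1]) (by linarith [hx.2])]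
      ring
    have e4 : ∀ x ∈ Set.Ioo (5/2:ℝ) 3,
        ψ x * φ (x - 1) = 3/2 + (-1) * x + (1/6) * x ^ 2 := by
      intro x hx
      rw [hψ6 x hx.1.le hx.2, hφ2 (x - 1) (by linarith [hx.1]) (by linarith [hx.2])]
      ring
    have hz : ∀ x ∉ Set.Ioc (1:ℝ) 3, ψ x * φ (x - 1) = 0 := by
      intro x hx
      simp only [Set.mem_Ioc, not_and_or, not_lt, not_le] at hx
      rcases hx with h | h
      · rw [hφ0 _ (Or.inl (by linarith)), mul_zero]
      · rw [hψ0 x (Or.inr (by linarith)), zero_mul]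
    rw [← MeasureTheory.setIntegral_eq_integral_of_forall_compl_eq_zero hz,
      ← intervalIntegral.integral_of_le (by norm_num : (1:ℝ) ≤ 3),
      ← intervalIntegral.integral_add_adjacent_intervals (hfi 1 2) (hfi 2 3),
      ← intervalIntegral.integral_add_adjacent_intervals (hfi 1 (3/2)) (hfi (3/2) 2),
      ← intervalIntegral.integral_add_adjacent_intervals (hfi 2 (5/2)) (hfi (5/2) 3),
      integral_congr_Ioo (by norm_num) e1, integral_congr_Ioo (by norm_num) e2,
      integral_congr_Ioo (by norm_num) e3, integral_congr_Ioo (by norm_num) e4,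
      poly_integral, poly_integral, poly_integral, poly_integral]
    norm_num
  · -- m = 2
    simp only [show ((2:ℤ):ℝ) = 2 from by norm_num] at hfi ⊢
    have e1 : ∀ x ∈ Set.Ioo (2:ℝ) (5/2),
        ψ x * φ (x - 2) = 17/3 + (-(31/6)) * x + (7/6) * x ^ 2 := by
      intro x hx
      rw [hψ5 x hx.1.le hx.2, hφ1 (x - 2) (by linarith [hx.1]) (by linarith [hx.2])]
      ring
    have e2 : ∀ x ∈ Set.Ioo (5/2:ℝ) 3,
        ψ x * φ (x - 2) = -1 + (5/6) * x + (-(1/6)) * x ^ 2 := by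
      intro x hx
      rw [hψ6 x hx.1.le hx.2, hφ1 (x - 2) (by linarith [hx.1]) (by linarith [hx.2])]
      ring
    have hz : ∀ x ∉ Set.Ioc (2:ℝ) 3, ψ x * φ (x - 2) = 0 := by
      intro x hx
      simp only [Set.mem_Ioc, not_and_or, not_lt, not_le] at hx
      rcases hx with h | h
      · rw [hφ0 _ (Or.inl (by linarith)), mul_zero]
      · rw [hψ0 x (Or.inr (by linarith)), zero_mul]
    rw [← MeasureTheory.setIntegral_eq_integral_of_forall_compl_eq_zero hz,
      ← intervalIntegral.integral_of_le (by norm_num : (2:ℝ) ≤ 3),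
      ← intervalIntegral.integral_add_adjacent_intervals (hfi 2 (5/2)) (hfi (5/2) 3),
      integral_congr_Ioo (by norm_num) e1, integral_congr_Ioo (by norm_num) e2,
      poly_integral, poly_integral]
    norm_num
end
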